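/- Under the continuity assumption on P^0, for every t ≥ 0 and every continuous bounded function f : X^0 × P(X×U) → ℝ, the joint law of the environment state and empirical state-action distribution in the N-agent system converges to the joint law of the mean-field environment state and mean-field state-action distribution, uniformly over all mean-field policies: sup_{π∈Π} |E[f(x^{0,N}_t, G^N_t)] − E[f(x^0_t, G(μ0, π_t(x^0_t)))]| → 0 as N → ∞. -/

import Mathlib

/-!
For a fixed decision rule `h`, the `N + 1` state-action pairs are i.i.d. with law
`ν = G(μ0, h)`, so a variance computation bounds the mean-square distance between the empirical
distribution and `ν` by `1 / (N + 1)`, whatever `h` is. A continuous `g` on the compact simplex is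
bounded and uniformly continuous, hence `|E g(𝔾^N) - g(ν)| ≤ η + 2C / (δ² (N + 1))`, uniformly in
`h`. Since one step of the `N`-agent environment integrates `P⁰` against the empirical
distribution, the laws of `x^{0,N}_t` converge to those of `x^0_t` uniformly in `π` by induction
on `t`, and the same bilinear estimate then gives the joint law.

Convergence uniform in a parameter `π` is expressed as convergence along `atTop ×ˢ ⊤`.
-/

open Finset Filter Topology

section MFC

variable {X U X0 : Type*} [Fintype X] [Fintype U] [Fintype X0]

/-- The state-action distribution `G(μ,h)(x,u) = h(x)(u)·μ(x)` induced by a state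
distribution `μ` and a decision rule `h ∈ 𝓗 = {h : X → 𝒫(U)}`. -/
noncomputable def jointG (μ : ↥(stdSimplex ℝ X)) (h : X → ↥(stdSimplex ℝ U)) :
    ↥(stdSimplex ℝ (X × U)) :=
  ⟨fun p => (h p.1).1 p.2 * μ.1 p.1,
   ⟨fun p => mul_nonneg ((h p.1).2.1 p.2) (μ.2.1 p.1), by
    calc ∑ p : X × U, (h p.1).1 p.2 * μ.1 p.1
        = ∑ x : X, ∑ u : U, (h x).1 u * μ.1 x := by rw [Fintype.sum_prod_type]
      _ = ∑ x : X, (∑ u : U, (h x).1 u) * μ.1 x := by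
          simp [Finset.sum_mul]
      _ = 1 := by
          simp only [fun x : X => (h x).2.2, one_mul]
          exact μ.2.2⟩⟩

/-- The (deterministic) empirical state-action distribution of the `N+1` sampled
state-action pairs `s i ∈ X × U`. -/
noncomputable def empDist [DecidableEq X] [DecidableEq U] (N : ℕ) (s : Fin (N + 1) → X × U) :
    ↥(stdSimplex ℝ (X × U)) :=
  ⟨fun p => (∑ i, if s i = p then (1 : ℝ) else 0) / (N + 1),
   ⟨fun p => div_nonneg (Finset.sum_nonneg fun i _ => by positivity) (by positivity), by
    rw [← Finset.sum_div, Finset.sum_comm]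
    simp only [Finset.sum_ite_eq, Finset.mem_univ, if_true, Finset.sum_const,
      Finset.card_univ, Fintype.card_fin, nsmul_eq_mul, mul_one]
    rw [Nat.cast_add, Nat.cast_one, div_self (by positivity)]⟩⟩

/-- The probability that the `N+1` agents, with states drawn i.i.d. from `μ0` and actions
drawn conditionally independently from the decision rules `d i`, sample exactly the
state-action pairs `s i`. -/
noncomputable def sampleWeight (N : ℕ) (μ0 : ↥(stdSimplex ℝ X))
    (d : Fin (N + 1) → X → ↥(stdSimplex ℝ U)) (s : Fin (N + 1) → X × U) : ℝ :=
  ∏ i, μ0.1 (s i).1 * (d i (s i).1).1 (s i).2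

/-- The expectation `E[f(𝔾^N)]` of a function `f` of the random empirical state-action
distribution `𝔾^N ~ 𝒢^N(μ0, (d¹,…,d^{N+1}))`. -/
noncomputable def empExp [DecidableEq X] [DecidableEq U] (N : ℕ) (μ0 : ↥(stdSimplex ℝ X))
    (d : Fin (N + 1) → X → ↥(stdSimplex ℝ U))
    (f : ↥(stdSimplex ℝ (X × U)) → ℝ) : ℝ :=
  ∑ s : Fin (N + 1) → X × U, sampleWeight N μ0 d s * f (empDist N s)

/-- The law of the environment state `x^{0,N}_t` of the `(N+1)`-agent system under the
policy tuple `πv`, with agent states resampled i.i.d. from `μ0` at every step. -/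
noncomputable def envLawN [DecidableEq X] [DecidableEq U] (N : ℕ) (μ0 : ↥(stdSimplex ℝ X))
    (μ00 : ↥(stdSimplex ℝ X0))
    (P0 : X0 → ↥(stdSimplex ℝ (X × U)) → ↥(stdSimplex ℝ X0))
    (πv : Fin (N + 1) → ℕ → X0 → X → ↥(stdSimplex ℝ U)) : ℕ → X0 → ℝ
  | 0 => fun y => μ00.1 y
  | t + 1 => fun y => ∑ x0 : X0, envLawN N μ0 μ00 P0 πv t x0 *
      empExp N μ0 (fun i => πv i t x0) (fun G => (P0 x0 G).1 y)

/-- The `(N+1)`-agent objective `J^N(π¹,…,π^{N+1}) = E[∑ₜ γᵗ r(x^{0,N}_t, 𝔾^N_t)]`. -/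
noncomputable def JN [DecidableEq X] [DecidableEq U] (N : ℕ) (μ0 : ↥(stdSimplex ℝ X))
    (μ00 : ↥(stdSimplex ℝ X0))
    (P0 : X0 → ↥(stdSimplex ℝ (X × U)) → ↥(stdSimplex ℝ X0))
    (r : X0 → ↥(stdSimplex ℝ (X × U)) → ℝ) (γ : ℝ)
    (πv : Fin (N + 1) → ℕ → X0 → X → ↥(stdSimplex ℝ U)) : ℝ :=
  ∑' t : ℕ, γ ^ t * ∑ x0 : X0, envLawN N μ0 μ00 P0 πv t x0 *
      empExp N μ0 (fun i => πv i t x0) (fun G => r x0 G)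

/-- The law of the mean-field environment state `x^0_t` under the mean-field policy `π`. -/
noncomputable def envLawMF (μ0 : ↥(stdSimplex ℝ X)) (μ00 : ↥(stdSimplex ℝ X0))
    (P0 : X0 → ↥(stdSimplex ℝ (X × U)) → ↥(stdSimplex ℝ X0))
    (π : ℕ → X0 → X → ↥(stdSimplex ℝ U)) : ℕ → X0 → ℝ
  | 0 => fun y => μ00.1 y
  | t + 1 => fun y => ∑ x0 : X0, envLawMF μ0 μ00 P0 π t x0 *
      (P0 x0 (jointG μ0 (π t x0))).1 y

/-- The mean-field objective `J(π) = E[∑ₜ γᵗ r(x^0_t, G(μ0, π_t(x^0_t)))]`. -/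
noncomputable def JMF (μ0 : ↥(stdSimplex ℝ X)) (μ00 : ↥(stdSimplex ℝ X0))
    (P0 : X0 → ↥(stdSimplex ℝ (X × U)) → ↥(stdSimplex ℝ X0))
    (r : X0 → ↥(stdSimplex ℝ (X × U)) → ℝ) (γ : ℝ)
    (π : ℕ → X0 → X → ↥(stdSimplex ℝ U)) : ℝ :=
  ∑' t : ℕ, γ ^ t * ∑ x0 : X0, envLawMF μ0 μ00 P0 π t x0 * r x0 (jointG μ0 (π t x0))

end MFC

section ProductWeights

variable {A : Type*} [Fintype A] {n : ℕ} {ν : A → ℝ}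

theorem sum_pi_prod_mul_prod (ν : A → ℝ) (F : Fin n → A → ℝ) :
    ∑ s : Fin n → A, (∏ k, ν (s k)) * ∏ k, F k (s k) = ∏ k, ∑ a, ν a * F k a := by
  simp only [← prod_mul_distrib, Fintype.prod_sum]

theorem sum_pi_prod_eq_one (hν : ∑ a, ν a = 1) : ∑ s : Fin n → A, ∏ k, ν (s k) = 1 := by
  rw [← Fintype.sum_pow, hν, one_pow]

theorem sum_pi_prod_mul_apply (hν : ∑ a, ν a = 1) (i : Fin n) (c : A → ℝ) :
    ∑ s : Fin n → A, (∏ k, ν (s k)) * c (s i) = ∑ a, ν a * c a := by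
  classical
  let F : Fin n → A → ℝ := Function.update (fun _ _ => 1) i c
  have hF (s : Fin n → A) : ∏ k, F k (s k) = c (s i) :=
    (Fintype.prod_eq_single i fun k hk => by simp [F, hk]).trans (by simp [F])
  have hEF : ∏ k, ∑ a, ν a * F k a = ∑ a, ν a * c a :=
    (Fintype.prod_eq_single i fun k hk => by simp [F, hk, hν]).trans (by simp [F])
  simpa only [hF, hEF] using sum_pi_prod_mul_prod ν F

theorem sum_pi_prod_mul_apply_mul_apply (hν : ∑ a, ν a = 1) {i j : Fin n} (hij : i ≠ j)
    (c c' : A → ℝ) :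
    ∑ s : Fin n → A, (∏ k, ν (s k)) * (c (s i) * c' (s j)) =
      (∑ a, ν a * c a) * ∑ a, ν a * c' a := by
  classical
  let F : Fin n → A → ℝ := Function.update (Function.update (fun _ _ => 1) i c) j c'
  have hF (s : Fin n → A) : ∏ k, F k (s k) = c (s i) * c' (s j) :=
    (Fintype.prod_eq_mul i j hij fun k hk => by simp [F, hk]).trans (by simp [F, hij])
  have hEF : ∏ k, ∑ a, ν a * F k a = (∑ a, ν a * c a) * ∑ a, ν a * c' a :=
    (Fintype.prod_eq_mul i j hij fun k hk => by simp [F, hk, hν]).trans (by simp [F, hij])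
  simpa only [hF, hEF] using sum_pi_prod_mul_prod ν F

theorem sum_pi_prod_mul_sum_sq (hν : ∑ a, ν a = 1) {c : A → ℝ} (hc : ∑ a, ν a * c a = 0) :
    ∑ s : Fin n → A, (∏ k, ν (s k)) * (∑ i, c (s i)) ^ 2 = n * ∑ a, ν a * c a ^ 2 := by
  have hpair (i j : Fin n) : ∑ s : Fin n → A, (∏ k, ν (s k)) * (c (s i) * c (s j)) =
      if i = j then ∑ a, ν a * c a ^ 2 else 0 := by
    split_ifs with hij
    · subst hij; simp only [← sq]; exact sum_pi_prod_mul_apply hν i (c · ^ 2)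
    · rw [sum_pi_prod_mul_apply_mul_apply hν hij, hc, zero_mul]
  calc ∑ s : Fin n → A, (∏ k, ν (s k)) * (∑ i, c (s i)) ^ 2
      = ∑ i, ∑ j, ∑ s : Fin n → A, (∏ k, ν (s k)) * (c (s i) * c (s j)) := by
        simp_rw [sq, sum_mul_sum, mul_sum]
        rw [sum_comm]
        exact sum_congr rfl fun i _ => sum_comm
    _ = n * ∑ a, ν a * c a ^ 2 := by simp [hpair]

theorem sum_pi_prod_mul_freq_sub_sq [DecidableEq A] (hν : ∑ a, ν a = 1) (p : A) :
    ∑ s : Fin (n + 1) → A, (∏ k, ν (s k)) *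
      ((∑ i, if s i = p then (1 : ℝ) else 0) / (n + 1) - ν p) ^ 2 = (ν p - ν p ^ 2) / (n + 1) := by
  set c : A → ℝ := fun a => (if a = p then 1 else 0) - ν p
  have hc : ∑ a, ν a * c a = 0 := by simp [c, mul_sub, ← sum_mul, hν]
  have hc2 : ∑ a, ν a * c a ^ 2 = ν p - ν p ^ 2 := by
    have (a : A) : ν a * c a ^ 2 = (if a = p then ν a else 0) * (1 - 2 * ν p) + ν a * ν p ^ 2 := by
      by_cases ha : a = p
      · simp only [c, ha, if_true]; ring
      · simp only [c, ha, if_false]; ring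
    simp only [this, sum_add_distrib, ← sum_mul, hν, sum_ite_eq', mem_univ, if_true]
    ring
  have hfreq (s : Fin (n + 1) → A) :
      (∑ i, if s i = p then (1 : ℝ) else 0) / (n + 1) - ν p = (∑ i, c (s i)) / (n + 1) := by
    simp only [c, sum_sub_distrib, sum_const, card_univ, Fintype.card_fin, nsmul_eq_mul]
    field_simp
    push_cast
    ring
  simp_rw [hfreq, div_pow, ← mul_div_assoc, ← sum_div, sum_pi_prod_mul_sum_sq hν hc, hc2]
  push_cast
  field_simp

end ProductWeights

theorem dist_sq_le_sum_sq {ι : Type*} [Fintype ι] (x y : ι → ℝ) :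
    dist x y ^ 2 ≤ ∑ i, (x i - y i) ^ 2 := by
  have hle : dist x y ≤ √(∑ i, (x i - y i) ^ 2) := by
    refine (dist_pi_le_iff (Real.sqrt_nonneg _)).2 fun i => ?_
    rw [Real.dist_eq]
    exact Real.abs_le_sqrt (single_le_sum (f := fun i => (x i - y i) ^ 2)
      (fun i _ => sq_nonneg _) (mem_univ i))
  calc dist x y ^ 2 ≤ √(∑ i, (x i - y i) ^ 2) ^ 2 := by gcongr
    _ = _ := Real.sq_sqrt (sum_nonneg fun i _ => sq_nonneg _)

theorem abs_sub_le_add_mul_dist_sq {α : Type*} [PseudoMetricSpace α] {g : α → ℝ} {C δ η : ℝ}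
    (hC : ∀ x, |g x| ≤ C) (hδ : 0 < δ) (hg : ∀ x y, dist x y < δ → dist (g x) (g y) < η)
    (x y : α) : |g x - g y| ≤ η + 2 * C / δ ^ 2 * dist x y ^ 2 := by
  have hC0 : 0 ≤ C := (abs_nonneg _).trans (hC x)
  have hK : 0 ≤ 2 * C / δ ^ 2 * dist x y ^ 2 := by positivity
  by_cases hxy : dist x y < δ
  · have := hg x y hxy
    rw [Real.dist_eq] at this
    linarith
  · have hη : 0 < η := by simpa using hg x x (by simpa using hδ)
    calc |g x - g y| ≤ 2 * C := (abs_sub (g x) (g y)).trans (by linarith [hC x, hC y])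
      _ ≤ 2 * C / δ ^ 2 * dist x y ^ 2 := by
        rw [div_mul_eq_mul_div, le_div_iff₀ (by positivity)]
        gcongr; linarith
      _ ≤ _ := by linarith

theorem abs_apply_le_one_of_mem_stdSimplex {ι : Type*} [Fintype ι] {f : ι → ℝ}
    (hf : f ∈ stdSimplex ℝ ι) (i : ι) : |f i| ≤ 1 := by
  rw [abs_of_nonneg (hf.1 i)]; exact (mem_Icc_of_mem_stdSimplex hf i).2

theorem tendsto_iSup_abs_of_tendsto_prod_top {β α : Type*} {l : Filter β} {φ : β → α → ℝ}
    (h : Tendsto (fun q : β × α => φ q.1 q.2) (l ×ˢ ⊤) (𝓝 0)) :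
    Tendsto (fun b => ⨆ x, |φ b x|) l (𝓝 0) := by
  rw [Metric.tendsto_nhds] at h ⊢
  intro ε hε
  have := h (ε / 2) (half_pos hε)
  rw [prod_top, eventually_comap] at this
  filter_upwards [this] with b hb
  have hsup : ⨆ x, |φ b x| ≤ ε / 2 :=
    Real.iSup_le (fun x => by simpa using (hb (b, x) rfl).le) (half_pos hε).le
  rw [Real.dist_eq, sub_zero, abs_of_nonneg (Real.iSup_nonneg fun x => abs_nonneg _)]
  linarith

theorem abs_sum_mul_sub_le {ι : Type*} [Fintype ι] {w a b : ι → ℝ} {c : ℝ}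
    (hw0 : ∀ i, 0 ≤ w i) (hw1 : ∑ i, w i = 1) (hab : ∀ i, |a i - c| ≤ b i) :
    |∑ i, w i * a i - c| ≤ ∑ i, w i * b i := by
  calc |∑ i, w i * a i - c| = |∑ i, w i * (a i - c)| := by
        simp [mul_sub, sum_sub_distrib, ← sum_mul, hw1]
    _ ≤ ∑ i, |w i * (a i - c)| := abs_sum_le_sum_abs _ _
    _ ≤ ∑ i, w i * b i := sum_le_sum fun i _ => by
        rw [abs_mul, abs_of_nonneg (hw0 i)]; exact mul_le_mul_of_nonneg_left (hab i) (hw0 i)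

theorem tendsto_sum_mul_sub_sum_mul {β ι : Type*} [Fintype ι] {l : Filter β}
    {L L' a a' : β → ι → ℝ} {C C' : ℝ}
    (hL : ∀ i, Tendsto (fun b => L b i - L' b i) l (𝓝 0))
    (ha : ∀ i, Tendsto (fun b => a b i - a' b i) l (𝓝 0))
    (haC : ∀ b i, |a b i| ≤ C) (hL'C : ∀ b i, |L' b i| ≤ C') :
    Tendsto (fun b => ∑ i, L b i * a b i - ∑ i, L' b i * a' b i) l (𝓝 0) := by
  have hsplit (b : β) : ∑ i, L b i * a b i - ∑ i, L' b i * a' b i =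
      ∑ i, ((L b i - L' b i) * a b i + L' b i * (a b i - a' b i)) := by
    rw [← sum_sub_distrib]; exact sum_congr rfl fun i _ => by ring
  simp_rw [hsplit]
  simpa using tendsto_finsetSum (univ : Finset ι) fun i _ =>
    ((hL i).zero_mul_isBoundedUnder_le (isBoundedUnder_of ⟨C, fun b => haC b i⟩)).add
      (isBoundedUnder_le_mul_tendsto_zero (isBoundedUnder_of ⟨C', fun b => hL'C b i⟩) (ha i))

section MeanField

variable {X U X0 : Type*} [Fintype X] [Fintype U] [Fintype X0] (μ0 : ↥(stdSimplex ℝ X))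

theorem sampleWeight_const_eq_prod (N : ℕ) (h : X → ↥(stdSimplex ℝ U)) (s : Fin (N + 1) → X × U) :
    sampleWeight N μ0 (fun _ => h) s = ∏ i, (jointG μ0 h).1 (s i) :=
  prod_congr rfl fun _ _ => mul_comm _ _

theorem sampleWeight_nonneg (N : ℕ) (h : X → ↥(stdSimplex ℝ U)) (s : Fin (N + 1) → X × U) :
    0 ≤ sampleWeight N μ0 (fun _ => h) s := by
  rw [sampleWeight_const_eq_prod]; exact prod_nonneg fun i _ => (jointG μ0 h).2.1 _

theorem sum_sampleWeight (N : ℕ) (h : X → ↥(stdSimplex ℝ U)) :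
    ∑ s, sampleWeight N μ0 (fun _ => h) s = 1 := by
  simp only [sampleWeight_const_eq_prod]; exact sum_pi_prod_eq_one (jointG μ0 h).2.2

theorem envLawMF_mem_stdSimplex (μ00 : ↥(stdSimplex ℝ X0))
    (P0 : X0 → ↥(stdSimplex ℝ (X × U)) → ↥(stdSimplex ℝ X0))
    (π : ℕ → X0 → X → ↥(stdSimplex ℝ U)) (t : ℕ) :
    envLawMF μ0 μ00 P0 π t ∈ stdSimplex ℝ X0 := by
  induction t with
  | zero => exact μ00.2
  | succ t ih =>
    have hmix : envLawMF μ0 μ00 P0 π (t + 1) =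
        ∑ x0, envLawMF μ0 μ00 P0 π t x0 • (P0 x0 (jointG μ0 (π t x0))).1 := by
      ext y; simp [envLawMF]
    rw [hmix]
    exact (convex_stdSimplex ℝ X0).sum_mem (fun x0 _ => ih.1 x0) ih.2 fun x0 _ => (P0 x0 _).2

variable [DecidableEq X] [DecidableEq U]

theorem abs_empExp_le {N : ℕ} {h : X → ↥(stdSimplex ℝ U)} {g : ↥(stdSimplex ℝ (X × U)) → ℝ}
    {C : ℝ} (hC : ∀ G, |g G| ≤ C) : |empExp N μ0 (fun _ => h) g| ≤ C := by
  have := abs_sum_mul_sub_le (c := 0) (sampleWeight_nonneg μ0 N h) (sum_sampleWeight μ0 N h)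
    fun s => (sub_zero (g (empDist N s))).symm ▸ hC (empDist N s)
  rwa [sub_zero, ← sum_mul, sum_sampleWeight, one_mul] at this

theorem sum_sampleWeight_mul_dist_sq_le (N : ℕ) (h : X → ↥(stdSimplex ℝ U)) :
    ∑ s, sampleWeight N μ0 (fun _ => h) s * dist (empDist N s) (jointG μ0 h) ^ 2 ≤
      1 / (N + 1) := by
  set ν := (jointG μ0 h).1
  calc ∑ s, sampleWeight N μ0 (fun _ => h) s * dist (empDist N s) (jointG μ0 h) ^ 2
      ≤ ∑ s, sampleWeight N μ0 (fun _ => h) s * ∑ p, ((empDist N s).1 p - ν p) ^ 2 :=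
        sum_le_sum fun s _ => mul_le_mul_of_nonneg_left (dist_sq_le_sum_sq _ _)
          (sampleWeight_nonneg μ0 N h s)
    _ = ∑ p, ∑ s : Fin (N + 1) → X × U, (∏ i, ν (s i)) *
          ((∑ i, if s i = p then (1 : ℝ) else 0) / (N + 1) - ν p) ^ 2 := by
        simp only [sampleWeight_const_eq_prod, mul_sum]
        exact sum_comm
    _ = ∑ p, (ν p - ν p ^ 2) / (N + 1) :=
        sum_congr rfl fun p _ => sum_pi_prod_mul_freq_sub_sq (jointG μ0 h).2.2 p
    _ ≤ ∑ p, ν p / (N + 1) := by gcongr with p; exact sub_le_self _ (sq_nonneg _)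
    _ = 1 / (N + 1) := by rw [← sum_div, (jointG μ0 h).2.2]

theorem abs_empExp_sub_le {g : ↥(stdSimplex ℝ (X × U)) → ℝ} {C δ η : ℝ} (hC : ∀ G, |g G| ≤ C)
    (hδ : 0 < δ) (hg : ∀ G G', dist G G' < δ → dist (g G) (g G') < η)
    (N : ℕ) (h : X → ↥(stdSimplex ℝ U)) :
    |empExp N μ0 (fun _ => h) g - g (jointG μ0 h)| ≤ η + 2 * C / δ ^ 2 / (N + 1) := by
  have hC0 : 0 ≤ C := (abs_nonneg _).trans (hC (jointG μ0 h))
  calc |empExp N μ0 (fun _ => h) g - g (jointG μ0 h)|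
      ≤ ∑ s, sampleWeight N μ0 (fun _ => h) s *
          (η + 2 * C / δ ^ 2 * dist (empDist N s) (jointG μ0 h) ^ 2) :=
        abs_sum_mul_sub_le (sampleWeight_nonneg μ0 N h) (sum_sampleWeight μ0 N h)
          fun s => abs_sub_le_add_mul_dist_sq hC hδ hg _ _
    _ = η + 2 * C / δ ^ 2 *
          ∑ s, sampleWeight N μ0 (fun _ => h) s * dist (empDist N s) (jointG μ0 h) ^ 2 := by
        simp only [mul_add, sum_add_distrib, ← sum_mul, sum_sampleWeight, one_mul, mul_sum]
        exact congrArg _ (sum_congr rfl fun s _ => by ring)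
    _ ≤ η + 2 * C / δ ^ 2 * (1 / (N + 1)) := by
        gcongr; exact sum_sampleWeight_mul_dist_sq_le μ0 N h
    _ = η + 2 * C / δ ^ 2 / (N + 1) := by ring

theorem tendsto_empExp_sub_of_continuous {β : Type*} (φ : β → X → ↥(stdSimplex ℝ U))
    {g : ↥(stdSimplex ℝ (X × U)) → ℝ} (hg : Continuous g) :
    Tendsto (fun q : ℕ × β => empExp q.1 μ0 (fun _ => φ q.2) g - g (jointG μ0 (φ q.2)))
      (atTop ×ˢ ⊤) (𝓝 0) := by
  have : CompactSpace ↥(stdSimplex ℝ (X × U)) :=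
    isCompact_iff_compactSpace.mp (isCompact_stdSimplex ℝ _)
  obtain ⟨C, hC⟩ := (isCompact_range hg.abs).bddAbove
  rw [Metric.tendsto_nhds]
  intro ε hε
  obtain ⟨δ, hδ, hunif⟩ := Metric.uniformContinuous_iff.mp
    (CompactSpace.uniformContinuous_of_continuous hg) (ε / 2) (half_pos hε)
  have htail : Tendsto (fun N : ℕ => 2 * C / δ ^ 2 / ((N : ℝ) + 1)) atTop (𝓝 0) := by
    simpa only [mul_zero, mul_one_div] using
      (tendsto_one_div_add_atTop_nhds_zero_nat (𝕜 := ℝ)).const_mul (2 * C / δ ^ 2)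
  rw [prod_top, eventually_comap]
  filter_upwards [htail.eventually_lt_const (half_pos hε)] with N hN q rfl
  rw [Real.dist_eq, sub_zero]
  have := abs_empExp_sub_le μ0 (fun G => hC ⟨G, rfl⟩) hδ (fun G G' => @hunif G G') q.1 (φ q.2)
  linarith

theorem tendsto_envLawN_sub_envLawMF (μ00 : ↥(stdSimplex ℝ X0))
    {P0 : X0 → ↥(stdSimplex ℝ (X × U)) → ↥(stdSimplex ℝ X0)} (hP0 : ∀ x0, Continuous (P0 x0))
    (t : ℕ) (y : X0) :
    Tendsto (fun q : ℕ × (ℕ → X0 → X → ↥(stdSimplex ℝ U)) =>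
        envLawN q.1 μ0 μ00 P0 (fun _ => q.2) t y - envLawMF μ0 μ00 P0 q.2 t y)
      (atTop ×ˢ ⊤) (𝓝 0) := by
  induction t generalizing y with
  | zero => simpa [envLawN, envLawMF] using tendsto_const_nhds
  | succ t ih =>
    simp only [envLawN, envLawMF]
    refine tendsto_sum_mul_sub_sum_mul (C := 1) (C' := 1) ih (fun x0 => ?_)
      (fun q x0 => abs_empExp_le μ0 fun G => abs_apply_le_one_of_mem_stdSimplex (P0 x0 G).2 y)
      (fun q x0 => abs_apply_le_one_of_mem_stdSimplex (envLawMF_mem_stdSimplex μ0 μ00 P0 q.2 t) x0)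
    have hcont : Continuous fun G => (P0 x0 G).1 y :=
      (continuous_apply y).comp (continuous_subtype_val.comp (hP0 x0))
    exact tendsto_empExp_sub_of_continuous μ0
      (fun π : ℕ → X0 → X → ↥(stdSimplex ℝ U) => π t x0) hcont

end MeanField

theorem joint_law_tendsto_mean_field_general
    {X U X0 : Type*} [Fintype X] [Fintype U] [Fintype X0]
    [DecidableEq X] [DecidableEq U]
    (μ0 : ↥(stdSimplex ℝ X)) (μ00 : ↥(stdSimplex ℝ X0))
    (P0 : X0 → ↥(stdSimplex ℝ (X × U)) → ↥(stdSimplex ℝ X0))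
    -- continuity of P⁰ in the state-action distribution
    (hP0 : ∀ x0, Continuous (P0 x0))
    (t : ℕ)
    -- a continuous bounded test function f : X⁰ × 𝒫(X×U) → ℝ
    (f : X0 → ↥(stdSimplex ℝ (X × U)) → ℝ)
    (hf : ∀ x0, Continuous (f x0)) (hfbd : ∃ C : ℝ, ∀ x0 G, |f x0 G| ≤ C) :
    Tendsto (fun N : ℕ =>
        ⨆ π : ℕ → X0 → X → ↥(stdSimplex ℝ U),
          |(∑ x0 : X0, envLawN N μ0 μ00 P0 (fun _ => π) t x0 *
              empExp N μ0 (fun _ => π t x0) (fun G => f x0 G)) -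
            ∑ x0 : X0, envLawMF μ0 μ00 P0 π t x0 * f x0 (jointG μ0 (π t x0))|)
      atTop (𝓝 0) := by
  obtain ⟨C, hC⟩ := hfbd
  refine tendsto_iSup_abs_of_tendsto_prod_top (tendsto_sum_mul_sub_sum_mul (C := C) (C' := 1)
    (tendsto_envLawN_sub_envLawMF μ0 μ00 hP0 t) (fun x0 => ?_)
    (fun q x0 => abs_empExp_le μ0 (hC x0))
    (fun q x0 => abs_apply_le_one_of_mem_stdSimplex (envLawMF_mem_stdSimplex μ0 μ00 P0 q.2 t) x0))
  exact tendsto_empExp_sub_of_continuous μ0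
    (fun π : ℕ → X0 → X → ↥(stdSimplex ℝ U) => π t x0) (hf x0)

/-- Under the continuity assumption on `P⁰`, for every `t ≥ 0` and every
continuous bounded `f : X⁰ × 𝒫(X×U) → ℝ`, the joint law of the environment state and
empirical state-action distribution in the `N`-agent system converges to the joint law of
the mean-field environment state and mean-field state-action distribution, uniformly over
all mean-field policies:
`sup_{π∈Π} |E[f(x^{0,N}_t, 𝔾^N_t)] − E[f(x^0_t, G(μ0, π_t(x^0_t)))]| → 0` as `N → ∞`.
(The number of agents is written as `N + 1`; the limit `N → ∞` is unaffected.) -/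
theorem joint_law_tendsto_mean_field
    {X U X0 : Type*} [Fintype X] [Fintype U] [Fintype X0]
    [Nonempty X] [Nonempty U] [Nonempty X0] [DecidableEq X] [DecidableEq U]
    (μ0 : ↥(stdSimplex ℝ X)) (μ00 : ↥(stdSimplex ℝ X0))
    (P0 : X0 → ↥(stdSimplex ℝ (X × U)) → ↥(stdSimplex ℝ X0))
    -- continuity of P⁰ in the state-action distribution
    (hP0 : ∀ x0, Continuous (P0 x0))
    (t : ℕ)
    -- a continuous bounded test function f : X⁰ × 𝒫(X×U) → ℝ
    (f : X0 → ↥(stdSimplex ℝ (X × U)) → ℝ)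
    (hf : ∀ x0, Continuous (f x0)) (hfbd : ∃ C : ℝ, ∀ x0 G, |f x0 G| ≤ C) :
    Tendsto (fun N : ℕ =>
        ⨆ π : ℕ → X0 → X → ↥(stdSimplex ℝ U),
          |(∑ x0 : X0, envLawN N μ0 μ00 P0 (fun _ => π) t x0 *
              empExp N μ0 (fun _ => π t x0) (fun G => f x0 G)) -
            ∑ x0 : X0, envLawMF μ0 μ00 P0 π t x0 * f x0 (jointG μ0 (π t x0))|)
      atTop (𝓝 0) :=
  joint_law_tendsto_mean_field_general μ0 μ00 P0 hP0 t f hf hfbd
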